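/- The monoid A^1 does not satisfy the identity x·y^2·t·x ≈ x·y^2·x·t·x: concretely, taking x = e, y = d, t = b in A^1, one has e·d^2·b·e = a while e·d^2·e·b·e = 0, so these two products are distinct. -/

import Mathlib

/-- The semigroup A = {0,a,b,c,d,e}. -/
inductive Asg | z | a | b | c | d | e
deriving DecidableEq

instance : Fintype Asg :=
  ⟨⟨(([.z, .a, .b, .c, .d, .e] : List Asg) : Multiset Asg), by decide⟩, by intro x; cases x <;> decide⟩

namespace Asg
def mul : Asg → Asg → Asg
  | .a, .e => .a
  | .b, .e => .b
  | .c, .b => .a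
  | .c, .d => .c
  | .d, .b => .b
  | .d, .d => .d
  | .e, .a => .a
  | .e, .b => .a
  | .e, .c => .c
  | .e, .d => .c
  | .e, .e => .e
  | _, _ => .z
end Asg

/-- The monoid A¹ obtained by adjoining an identity to A. -/
inductive A1 | z | a | b | c | d | e | one
deriving DecidableEq

instance : Fintype A1 :=
  ⟨⟨(([.z, .a, .b, .c, .d, .e, .one] : List A1) : Multiset A1), by decide⟩, by intro x; cases x <;> decide⟩

namespace A1
def mul : A1 → A1 → A1
  | .one, x => x
  | x, .one => x
  | .a, .e => .a
  | .b, .e => .b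
  | .c, .b => .a
  | .c, .d => .c
  | .d, .b => .b
  | .d, .d => .d
  | .e, .a => .a
  | .e, .b => .a
  | .e, .c => .c
  | .e, .d => .c
  | .e, .e => .e
  | _, _ => .z

instance : Mul A1 := ⟨A1.mul⟩
instance : One A1 := ⟨A1.one⟩

instance : Monoid A1 where
  mul_assoc := by decide
  one_mul := by decide
  mul_one := by decide
end A1

namespace A1

theorem e_mul_d_sq : e * d ^ 2 = c := rfl

theorem c_mul_b : c * b = a := rfl

theorem a_mul_e : a * e = a := rfl

theorem c_mul_e : c * e = z := rfl

theorem z_mul (x : A1) : z * x = z := by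
  cases x <;> rfl

end A1

/-- A¹ fails x·y²·t·x ≈ x·y²·x·t·x, witnessed by x = e, y = d, t = b. -/
theorem A1_fails_xy2tx :
    A1.e * A1.d ^ 2 * A1.b * A1.e = A1.a ∧
    A1.e * A1.d ^ 2 * A1.e * A1.b * A1.e = A1.z ∧
    A1.e * A1.d ^ 2 * A1.b * A1.e ≠ A1.e * A1.d ^ 2 * A1.e * A1.b * A1.e := by
  have lhs : A1.e * A1.d ^ 2 * A1.b * A1.e = A1.a := by
    rw [A1.e_mul_d_sq, A1.c_mul_b, A1.a_mul_e]
  have rhs : A1.e * A1.d ^ 2 * A1.e * A1.b * A1.e = A1.z := by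
    rw [A1.e_mul_d_sq, A1.c_mul_e, A1.z_mul, A1.z_mul]
  exact ⟨lhs, rhs, by rw [lhs, rhs]; decide⟩
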